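/- arXiv:math/0305099 — 5 statements merged into one kernel-verified Lean document; each statement's English description precedes it below -/
import Mathlib

section
/- If f : [0,T] → ℝ is a nonnegative differentiable function satisfying f(t)² ≤ -a·f'(t) + b for all t ∈ [0,T], where a, b > 0, then f(T) ≤ √(2b) + 2a/T. -/
/-- Auxiliary: if `f ≥ c` on `[s,T]` with `c² ≥ 2b`, then `1/f` grows at rate `≥ 1/(2a)`. -/
lemma ode_comparison_aux (f : ℝ → ℝ) (T a b c s : ℝ) (ha : 0 < a) (hc : 0 < c)
    (hc2 : 2 * b ≤ c ^ 2) (hs0 : 0 ≤ s) (hsT : s ≤ T)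
    (hdiff : ∀ t ∈ Set.Icc (0 : ℝ) T, DifferentiableAt ℝ f t)
    (hineq : ∀ t ∈ Set.Icc (0 : ℝ) T, (f t) ^ 2 ≤ -a * deriv f t + b)
    (hge : ∀ t ∈ Set.Icc s T, c ≤ f t) :
    (f s)⁻¹ + (T - s) / (2 * a) ≤ (f T)⁻¹ := by
  set g : ℝ → ℝ := fun t => (f t)⁻¹ - t / (2 * a) with hg
  have hsub : Set.Icc s T ⊆ Set.Icc (0 : ℝ) T := fun t ht => ⟨hs0.trans ht.1, ht.2⟩
  have hfpos : ∀ t ∈ Set.Icc s T, 0 < f t := fun t ht => lt_of_lt_of_le hc (hge t ht)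
  have hcontf : ContinuousOn f (Set.Icc s T) := fun t ht =>
    ((hdiff t (hsub ht)).continuousAt).continuousWithinAt
  have hcontg : ContinuousOn g (Set.Icc s T) := by
    apply ContinuousOn.sub
    · exact hcontf.inv₀ (fun t ht => (hfpos t ht).ne')
    · exact (continuous_id.div_const _).continuousOn
  have hderiv : ∀ x ∈ Set.Ioo s T,
      HasDerivAt g (-deriv f x / (f x) ^ 2 - 1 / (2 * a)) x := by
    intro x hx
    have hx' : x ∈ Set.Icc s T := ⟨hx.1.le, hx.2.le⟩
    have hfx : f x ≠ 0 := (hfpos x hx').ne'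
    have h1 : HasDerivAt (fun t => (f t)⁻¹) (-deriv f x / (f x) ^ 2) x :=
      ((hdiff x (hsub hx')).hasDerivAt).inv hfx
    have h2 : HasDerivAt (fun t : ℝ => t / (2 * a)) (1 / (2 * a)) x := by
      simpa using (hasDerivAt_id x).div_const (2 * a)
    exact h1.sub h2
  have hmono : MonotoneOn g (Set.Icc s T) := by
    apply monotoneOn_of_deriv_nonneg (convex_Icc s T) hcontg
    · intro x hx
      rw [interior_Icc] at hx
      exact ((hderiv x hx).differentiableAt).differentiableWithinAt
    · intro x hx
      rw [interior_Icc] at hx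
      rw [(hderiv x hx).deriv]
      have hx' : x ∈ Set.Icc s T := ⟨hx.1.le, hx.2.le⟩
      have hfx : 0 < f x := hfpos x hx'
      have hfx2 : 0 < (f x) ^ 2 := by positivity
      have hq : (f x) ^ 2 ≤ -a * deriv f x + b := hineq x (hsub hx')
      have hcle : c ^ 2 ≤ (f x) ^ 2 := by nlinarith [hge x hx']
      have : 1 / (2 * a) ≤ -deriv f x / (f x) ^ 2 := by
        rw [le_div_iff₀ hfx2, div_mul_eq_mul_div, div_le_iff₀ (by positivity : (0:ℝ) < 2 * a)]
        nlinarith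
      linarith
  have := hmono (Set.left_mem_Icc.mpr hsT) (Set.right_mem_Icc.mpr hsT) hsT
  simp only [hg] at this
  have hds : (T - s) / (2 * a) = T / (2 * a) - s / (2 * a) := sub_div _ _ _
  linarith

/-- ODE comparison lemma: if `f ≥ 0` is differentiable on `[0,T]` and satisfies
`f(t)² ≤ -a f'(t) + b` with `a, b > 0`, then `f(T) ≤ √(2b) + 2a/T`. -/
theorem ode_comparison (f : ℝ → ℝ) (T a b : ℝ) (hT : 0 < T) (ha : 0 < a) (hb : 0 < b)
    (hdiff : ∀ t ∈ Set.Icc (0 : ℝ) T, DifferentiableAt ℝ f t)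
    (hpos : ∀ t ∈ Set.Icc (0 : ℝ) T, 0 ≤ f t)
    (hineq : ∀ t ∈ Set.Icc (0 : ℝ) T, (f t) ^ 2 ≤ -a * deriv f t + b) :
    f T ≤ Real.sqrt (2 * b) + 2 * a / T := by
  by_contra h
  push_neg at h
  set c := Real.sqrt (2 * b) with hcdef
  have hc : 0 < c := Real.sqrt_pos.mpr (by linarith)
  have hc2 : 2 * b ≤ c ^ 2 := by
    rw [hcdef, Real.sq_sqrt (by linarith : (0:ℝ) ≤ 2 * b)]
  have hTmem : T ∈ Set.Icc (0 : ℝ) T := Set.right_mem_Icc.mpr hT.le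
  have hfT : 0 < f T := lt_of_le_of_lt (by positivity : (0:ℝ) ≤ c + 2 * a / T) h
  have haT : 0 < 2 * a / T := by positivity
  by_cases hS : ∃ t ∈ Set.Icc (0 : ℝ) T, f t ≤ c
  · -- there is a point where f ≤ c; take the largest such point t1
    have hcontf : ContinuousOn f (Set.Icc (0 : ℝ) T) := fun t ht =>
      ((hdiff t ht).continuousAt).continuousWithinAt
    set S := Set.Icc (0 : ℝ) T ∩ f ⁻¹' Set.Iic c with hSdef
    have hSclosed : IsClosed S := hcontf.preimage_isClosed_of_isClosed isClosed_Icc isClosed_Iic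
    have hScompact : IsCompact S :=
      isCompact_Icc.of_isClosed_subset hSclosed Set.inter_subset_left
    have hSne : S.Nonempty := by
      obtain ⟨t, ht, hft⟩ := hS
      exact ⟨t, ht, hft⟩
    obtain ⟨t1, ht1S, ht1max⟩ := hScompact.exists_isMaxOn hSne continuousOn_id
    have ht1Icc : t1 ∈ Set.Icc (0 : ℝ) T := ht1S.1
    have hft1 : f t1 ≤ c := ht1S.2
    have ht1T : t1 < T := by
      rcases lt_or_eq_of_le ht1Icc.2 with h' | h'
      · exact h'
      · exfalso; rw [h'] at hft1; linarith
    -- f t1 = c : f t1 ≥ c since just to the right of t1, f > c would fail otherwise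
    have hft1' : c ≤ f t1 := by
      by_contra hlt
      push_neg at hlt
      have hca : ContinuousAt f t1 := (hdiff t1 ht1Icc).continuousAt
      have hev : ∀ᶠ t in nhds t1, f t < c :=
        hca.eventually_lt continuousAt_const hlt
      have hev' : ∀ᶠ t in nhdsWithin t1 (Set.Ioi t1), f t < c :=
        hev.filter_mono nhdsWithin_le_nhds
      have hev2 : ∀ᶠ t in nhdsWithin t1 (Set.Ioi t1), t ∈ Set.Ioc t1 T :=
        Ioc_mem_nhdsGT_of_mem ⟨le_refl t1, ht1T⟩
      obtain ⟨t', hft', ht'⟩ := (hev'.and hev2).exists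
      have ht'S : t' ∈ S := ⟨⟨ht1Icc.1.trans ht'.1.le, ht'.2⟩, hft'.le⟩
      have := ht1max ht'S
      simp only [id_eq] at this
      exact absurd ht'.1 (not_lt.mpr this)
    have hge : ∀ t ∈ Set.Icc t1 T, c ≤ f t := by
      intro t ht
      by_contra hlt
      push_neg at hlt
      have htS : t ∈ S := ⟨⟨ht1Icc.1.trans ht.1, ht.2⟩, hlt.le⟩
      have := ht1max htS
      simp only [id_eq] at this
      have : t = t1 := le_antisymm this ht.1
      rw [this] at hlt
      linarith
    have key := ode_comparison_aux f T a b c t1 ha hc hc2 ht1Icc.1 ht1T.le hdiff hineq hge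
    have heq : f t1 = c := le_antisymm hft1 hft1'
    rw [heq] at key
    have htT : 0 ≤ (T - t1) / (2 * a) := div_nonneg (by linarith [ht1T.le]) (by positivity)
    have hinv : c⁻¹ ≤ (f T)⁻¹ := by linarith
    have : f T ≤ c := by
      rwa [inv_le_inv₀ hc hfT] at hinv
    linarith
  · -- f > c everywhere on [0,T]
    push_neg at hS
    have hge : ∀ t ∈ Set.Icc (0 : ℝ) T, c ≤ f t := fun t ht => (hS t ht).le
    have key := ode_comparison_aux f T a b c 0 ha hc hc2 le_rfl hT.le hdiff hineq hge
    have hf0 : 0 < f 0 := lt_of_lt_of_le hc (hge 0 (Set.left_mem_Icc.mpr hT.le))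
    rw [sub_zero] at key
    have h1 : T / (2 * a) ≤ (f T)⁻¹ := by
      have : 0 < (f 0)⁻¹ := by positivity
      linarith
    have h2 : f T ≤ 2 * a / T := by
      rw [le_div_iff₀ hT]
      have := mul_le_mul_of_nonneg_left h1 hfT.le
      rw [mul_inv_cancel₀ hfT.ne'] at this
      have h3 : f T * (T / (2 * a)) ≤ 1 := this
      rw [mul_div_assoc'] at h3
      exact (div_le_one (by positivity)).mp h3
    linarith
end

section
/- If f ≥ 0 is differentiable on [t₀, T], f(t)² ≥ 2b on [t₀,T] for some b > 0, and f(t)² ≤ -2a f'(t) on [t₀,T] with a > 0, then 1/f(T) ≥ 1/f(t₀) + (T - t₀)/(2a). -/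
/-- Key step of the ODE comparison lemma: if `f > 0` is differentiable on `[t₀,T]`,
`f(t)² ≥ 2b > 0` and `f(t)² ≤ -2a f'(t)` with `a > 0` on `[t₀,T]`, then
`1/f(T) ≥ 1/f(t₀) + (T - t₀)/(2a)`. -/
theorem ode_comparison_step (f : ℝ → ℝ) (t₀ T a b : ℝ) (ht : t₀ ≤ T)
    (ha : 0 < a) (hb : 0 < b)
    (hdiff : ∀ t ∈ Set.Icc t₀ T, DifferentiableAt ℝ f t)
    (hpos : ∀ t ∈ Set.Icc t₀ T, 0 < f t)
    (hlow : ∀ t ∈ Set.Icc t₀ T, 2 * b ≤ (f t) ^ 2)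
    (hineq : ∀ t ∈ Set.Icc t₀ T, (f t) ^ 2 ≤ -(2 * a) * deriv f t) :
    1 / f t₀ + (T - t₀) / (2 * a) ≤ 1 / f T := by
  set g : ℝ → ℝ := fun t => (f t)⁻¹ - t / (2 * a) with hg
  have ha2 : (0:ℝ) < 2 * a := by linarith
  have hgd : ∀ t ∈ Set.Icc t₀ T,
      HasDerivAt g (-deriv f t / (f t) ^ 2 - 1 / (2 * a)) t := by
    intro t htm
    have h1 : HasDerivAt f (deriv f t) t := (hdiff t htm).hasDerivAt
    have hft : f t ≠ 0 := (hpos t htm).ne'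
    have h2 := h1.inv hft
    have h3 : HasDerivAt (fun s : ℝ => s / (2 * a)) (1 / (2 * a)) t := by
      simpa using (hasDerivAt_id t).div_const (2 * a)
    exact h2.sub h3
  have hmono : MonotoneOn g (Set.Icc t₀ T) := by
    apply monotoneOn_of_deriv_nonneg (convex_Icc t₀ T)
    · exact ContinuousOn.congr (fun t htm =>
        ((hgd t htm).continuousAt.continuousWithinAt)) (fun _ _ => rfl)
    · intro t htm
      rw [interior_Icc] at htm
      exact (hgd t (Set.Ioo_subset_Icc_self htm)).differentiableAt.differentiableWithinAt
    · intro t htm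
      rw [interior_Icc] at htm
      have htm' := Set.Ioo_subset_Icc_self htm
      rw [(hgd t htm').deriv]
      have hf2 : (0:ℝ) < (f t) ^ 2 := pow_pos (hpos t htm') 2
      have := hineq t htm'
      rw [sub_nonneg, div_le_div_iff₀ ha2 hf2]
      nlinarith
  have key := hmono (Set.left_mem_Icc.mpr ht) (Set.right_mem_Icc.mpr ht) ht
  simp only [hg] at key
  have h0 : f t₀ ≠ 0 := (hpos t₀ (Set.left_mem_Icc.mpr ht)).ne'
  have hT : f T ≠ 0 := (hpos T (Set.right_mem_Icc.mpr ht)).ne'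
  rw [one_div, one_div, sub_div]
  linarith [key]
end

section
/- Let w : ℝⁿ → ℝ be a C¹ function with bounded sup norm, and let φ : ℝⁿ → ℝ be a C¹ compactly supported function. Then ∫ φ² (1+|dw|²)^{1/2} dx ≤ ∫ φ² dx + ‖w‖_∞ ∫ |d(φ²)| dx + ‖w‖_∞ ∫ φ² |H| dx, where H = -div( dw / (1+|dw|²)^{1/2} ) is the mean curvature of the graph of w. -/
/-!
Write `ν = dw/√(1+|dw|²)`, so that `H = -div ν` and `|ν| ≤ 1`. Integrating `div ν` against
`φ²w` by parts and expanding `d(φ²w)·ν = w d(φ²)·ν + φ²|dw|²/√(1+|dw|²)` gives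
`∫ φ²|dw|²/√(1+|dw|²) = ∫ φ²wH - ∫ w d(φ²)·ν ≤ ‖w‖_∞ ∫ φ²|H| + ‖w‖_∞ ∫ |d(φ²)|`,
and the left side dominates `∫ φ²(√(1+|dw|²) - 1)`.
-/

open MeasureTheory

/-- The `i`-th partial derivative of `f : ℝⁿ → ℝ`. -/
noncomputable def partialDeriv' (n : ℕ) (f : EuclideanSpace ℝ (Fin n) → ℝ) (i : Fin n)
    (x : EuclideanSpace ℝ (Fin n)) : ℝ :=
  fderiv ℝ f x (EuclideanSpace.single i 1)

/-- The squared length `|df|²` of the gradient of `f : ℝⁿ → ℝ`. -/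
noncomputable def gradSq (n : ℕ) (f : EuclideanSpace ℝ (Fin n) → ℝ)
    (x : EuclideanSpace ℝ (Fin n)) : ℝ :=
  ∑ i, (partialDeriv' n f i x) ^ 2

/-- The mean curvature `H = -div(df/√(1+|df|²))` of the graph of `f : ℝⁿ → ℝ`. -/
noncomputable def meanCurv (n : ℕ) (f : EuclideanSpace ℝ (Fin n) → ℝ)
    (x : EuclideanSpace ℝ (Fin n)) : ℝ :=
  -∑ i, partialDeriv' n (fun y => partialDeriv' n f i y / Real.sqrt (1 + gradSq n f y)) i x

noncomputable def divergence (n : ℕ) (V : Fin n → EuclideanSpace ℝ (Fin n) → ℝ)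
    (x : EuclideanSpace ℝ (Fin n)) : ℝ :=
  ∑ i, partialDeriv' n (V i) i x

noncomputable def normalizedGrad (n : ℕ) (w : EuclideanSpace ℝ (Fin n) → ℝ) (i : Fin n)
    (x : EuclideanSpace ℝ (Fin n)) : ℝ :=
  partialDeriv' n w i x / Real.sqrt (1 + gradSq n w x)

theorem Real.sqrt_one_add_le_one_add_div_sqrt {g : ℝ} (hg : 0 ≤ g) :
    √(1 + g) ≤ 1 + g / √(1 + g) := by
  have hs : 1 ≤ √(1 + g) := Real.one_le_sqrt.2 (by linarith)
  have hsq : √(1 + g) * √(1 + g) = 1 + g := Real.mul_self_sqrt (by linarith)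
  rw [← sub_nonneg]
  have : 1 + g / √(1 + g) - √(1 + g) = (√(1 + g) - 1) / √(1 + g) := by
    field_simp
    linear_combination -hsq
  rw [this]
  exact div_nonneg (by linarith) (by linarith)

theorem mul_le_mul_abs_of_abs_le {a M : ℝ} (ha : |a| ≤ M) (b : ℝ) : a * b ≤ M * |b| :=
  ((le_abs_self _).trans_eq (abs_mul a b)).trans (mul_le_mul_of_nonneg_right ha (abs_nonneg b))

theorem EuclideanSpace.abs_sum_apply_single_mul_le_opNorm {ι : Type*} [Fintype ι]
    [DecidableEq ι] (L : EuclideanSpace ℝ ι →L[ℝ] ℝ) {c : ι → ℝ} (hc : ∑ i, c i ^ 2 ≤ 1) :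
    |∑ i, L (EuclideanSpace.single i 1) * c i| ≤ ‖L‖ := by
  have hc_eq : WithLp.toLp 2 c = ∑ i, c i • EuclideanSpace.single i (1 : ℝ) := by
    ext j
    simp [Pi.single_apply]
  have hL : ∑ i, L (EuclideanSpace.single i 1) * c i = L (WithLp.toLp 2 c) := by
    simp [hc_eq, mul_comm]
  have hc' : ‖WithLp.toLp 2 c‖ ≤ 1 := by
    rw [EuclideanSpace.norm_eq]
    simpa using Real.sqrt_le_one.mpr hc
  rw [hL, ← Real.norm_eq_abs]
  exact L.le_of_opNorm_le_of_le le_rfl hc' |>.trans (by simp)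

section Graph

variable {n : ℕ}

theorem meanCurv_eq_neg_divergence (w : EuclideanSpace ℝ (Fin n) → ℝ) :
    meanCurv n w = -divergence n (normalizedGrad n w) :=
  rfl

theorem gradSq_nonneg (w : EuclideanSpace ℝ (Fin n) → ℝ) (x : EuclideanSpace ℝ (Fin n)) :
    0 ≤ gradSq n w x :=
  Finset.sum_nonneg fun _ _ => sq_nonneg _

theorem sqrt_one_add_gradSq_pos (w : EuclideanSpace ℝ (Fin n) → ℝ)
    (x : EuclideanSpace ℝ (Fin n)) : 0 < √(1 + gradSq n w x) :=
  Real.sqrt_pos.2 (by linarith [gradSq_nonneg w x])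

theorem sum_normalizedGrad_sq_le_one (w : EuclideanSpace ℝ (Fin n) → ℝ)
    (x : EuclideanSpace ℝ (Fin n)) : ∑ i, normalizedGrad n w i x ^ 2 ≤ 1 := by
  have hg := gradSq_nonneg w x
  have hsq : √(1 + gradSq n w x) ^ 2 = 1 + gradSq n w x := Real.sq_sqrt (by linarith)
  simp only [normalizedGrad, div_pow, hsq, ← Finset.sum_div]
  rw [div_le_one (by linarith)]
  change gradSq n w x ≤ 1 + gradSq n w x
  linarith

theorem partialDeriv'_mul {f g : EuclideanSpace ℝ (Fin n) → ℝ} {x : EuclideanSpace ℝ (Fin n)}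
    (hf : DifferentiableAt ℝ f x) (hg : DifferentiableAt ℝ g x) (i : Fin n) :
    partialDeriv' n (fun y => f y * g y) i x =
      f x * partialDeriv' n g i x + g x * partialDeriv' n f i x := by
  simp [partialDeriv', fderiv_fun_mul hf hg]

theorem ContDiff.partialDeriv' {f : EuclideanSpace ℝ (Fin n) → ℝ} {k m : WithTop ℕ∞}
    (hf : ContDiff ℝ k f) (hmk : m + 1 ≤ k) (i : Fin n) :
    ContDiff ℝ m (_root_.partialDeriv' n f i) :=
  (hf.fderiv_right hmk).clm_apply contDiff_const

theorem HasCompactSupport.partialDeriv' {f : EuclideanSpace ℝ (Fin n) → ℝ}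
    (hf : HasCompactSupport f) (i : Fin n) :
    HasCompactSupport (_root_.partialDeriv' n f i) :=
  hf.fderiv_apply ℝ _

theorem ContDiff.continuous_partialDeriv' {f : EuclideanSpace ℝ (Fin n) → ℝ}
    (hf : ContDiff ℝ 1 f) (i : Fin n) : Continuous (_root_.partialDeriv' n f i) :=
  (hf.partialDeriv' (m := 0) (by simp) i).continuous

theorem ContDiff.gradSq {w : EuclideanSpace ℝ (Fin n) → ℝ} {k m : WithTop ℕ∞}
    (hw : ContDiff ℝ k w) (hmk : m + 1 ≤ k) : ContDiff ℝ m (_root_.gradSq n w) :=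
  ContDiff.sum fun i _ => (hw.partialDeriv' hmk i).pow 2

theorem ContDiff.sqrt_one_add_gradSq {w : EuclideanSpace ℝ (Fin n) → ℝ} {k m : WithTop ℕ∞}
    (hw : ContDiff ℝ k w) (hmk : m + 1 ≤ k) : ContDiff ℝ m fun x => √(1 + _root_.gradSq n w x) :=
  (contDiff_const.add (hw.gradSq hmk)).sqrt fun x =>
    (add_pos_of_pos_of_nonneg one_pos (gradSq_nonneg w x)).ne'

theorem ContDiff.normalizedGrad {w : EuclideanSpace ℝ (Fin n) → ℝ} {k m : WithTop ℕ∞}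
    (hw : ContDiff ℝ k w) (hmk : m + 1 ≤ k) (i : Fin n) :
    ContDiff ℝ m (_root_.normalizedGrad n w i) :=
  (hw.partialDeriv' hmk i).div (hw.sqrt_one_add_gradSq hmk)
    fun x => (sqrt_one_add_gradSq_pos w x).ne'

theorem ContDiff.continuous_gradSq_div_sqrt {w : EuclideanSpace ℝ (Fin n) → ℝ}
    (hw : ContDiff ℝ 1 w) :
    Continuous fun x => _root_.gradSq n w x / √(1 + _root_.gradSq n w x) :=
  (hw.gradSq (m := 0) (by simp)).continuous.div
    (hw.sqrt_one_add_gradSq (m := 0) (by simp)).continuous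
    fun x => (sqrt_one_add_gradSq_pos w x).ne'

theorem abs_sum_partialDeriv'_mul_normalizedGrad_le (f w : EuclideanSpace ℝ (Fin n) → ℝ)
    (x : EuclideanSpace ℝ (Fin n)) :
    |∑ i, partialDeriv' n f i x * normalizedGrad n w i x| ≤ ‖fderiv ℝ f x‖ :=
  EuclideanSpace.abs_sum_apply_single_mul_le_opNorm _ (sum_normalizedGrad_sq_le_one w x)

theorem integral_mul_partialDeriv'_eq_neg {f g : EuclideanSpace ℝ (Fin n) → ℝ}
    (hf : ContDiff ℝ 1 f) (hfs : HasCompactSupport f) (hg : ContDiff ℝ 1 g) (i : Fin n) :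
    ∫ x, f x * partialDeriv' n g i x = -∫ x, partialDeriv' n f i x * g x :=
  integral_mul_fderiv_eq_neg_fderiv_mul_of_integrable
    (((hf.continuous_partialDeriv' i).mul hg.continuous).integrable_of_hasCompactSupport
      (hfs.partialDeriv' i).mul_right)
    ((hf.continuous.mul (hg.continuous_partialDeriv' i)).integrable_of_hasCompactSupport
      hfs.mul_right)
    ((hf.continuous.mul hg.continuous).integrable_of_hasCompactSupport hfs.mul_right)
    (fun x _ => hf.differentiable one_ne_zero x) (fun x _ => hg.differentiable one_ne_zero x)

theorem integral_mul_divergence_eq_neg {f : EuclideanSpace ℝ (Fin n) → ℝ}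
    {V : Fin n → EuclideanSpace ℝ (Fin n) → ℝ} (hf : ContDiff ℝ 1 f) (hfs : HasCompactSupport f)
    (hV : ∀ i, ContDiff ℝ 1 (V i)) :
    ∫ x, f x * divergence n V x = -∫ x, ∑ i, partialDeriv' n f i x * V i x := by
  have hint : ∀ i, Integrable fun x => f x * partialDeriv' n (V i) i x := fun i =>
    (hf.continuous.mul ((hV i).continuous_partialDeriv' i)).integrable_of_hasCompactSupport
      hfs.mul_right
  have hint' : ∀ i, Integrable fun x => partialDeriv' n f i x * V i x := fun i =>
    ((hf.continuous_partialDeriv' i).mul (hV i).continuous).integrable_of_hasCompactSupport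
      (hfs.partialDeriv' i).mul_right
  simp only [divergence, Finset.mul_sum]
  rw [integral_finsetSum _ fun i _ => hint i, integral_finsetSum _ fun i _ => hint' i,
    ← Finset.sum_neg_distrib]
  exact Finset.sum_congr rfl fun i _ => integral_mul_partialDeriv'_eq_neg hf hfs (hV i) i

theorem integrable_mul_sum_partialDeriv'_mul {f g : EuclideanSpace ℝ (Fin n) → ℝ}
    {V : Fin n → EuclideanSpace ℝ (Fin n) → ℝ} (hf : ContDiff ℝ 1 f) (hfs : HasCompactSupport f)
    (hg : Continuous g) (hV : ∀ i, Continuous (V i)) :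
    Integrable fun x => g x * ∑ i, partialDeriv' n f i x * V i x := by
  have hS : HasCompactSupport fun x => ∑ i, partialDeriv' n f i x * V i x := by
    simpa only [Finset.sum_fn, Pi.mul_apply] using HasCompactSupport.finset_sum (s := .univ)
      fun i _ => (hfs.partialDeriv' i).mul_right (f' := V i)
  exact (hg.mul (continuous_finsetSum _ fun i _ => (hf.continuous_partialDeriv' i).mul (hV i)))
    |>.integrable_of_hasCompactSupport hS.mul_left

theorem sum_partialDeriv'_mul_mul_normalizedGrad {ψ w : EuclideanSpace ℝ (Fin n) → ℝ}
    {x : EuclideanSpace ℝ (Fin n)} (hψ : DifferentiableAt ℝ ψ x) (hw : DifferentiableAt ℝ w x) :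
    ∑ i, partialDeriv' n (fun y => ψ y * w y) i x * normalizedGrad n w i x =
      w x * ∑ i, partialDeriv' n ψ i x * normalizedGrad n w i x +
        ψ x * (gradSq n w x / √(1 + gradSq n w x)) := by
  simp only [partialDeriv'_mul hψ hw, normalizedGrad, gradSq, Finset.mul_sum, Finset.sum_div,
    ← Finset.sum_add_distrib]
  exact Finset.sum_congr rfl fun i _ => by ring

theorem integral_mul_gradSq_div_sqrt_eq {ψ w : EuclideanSpace ℝ (Fin n) → ℝ}
    (hψ : ContDiff ℝ 1 ψ) (hψs : HasCompactSupport ψ) (hw : ContDiff ℝ 2 w) :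
    ∫ x, ψ x * (gradSq n w x / √(1 + gradSq n w x)) =
      (∫ x, ψ x * w x * meanCurv n w x) -
        ∫ x, w x * ∑ i, partialDeriv' n ψ i x * normalizedGrad n w i x := by
  have hw1 : ContDiff ℝ 1 w := hw.of_le one_le_two
  have hν : ∀ i, ContDiff ℝ 1 (normalizedGrad n w i) := hw.normalizedGrad (by norm_num)
  have hwS := integrable_mul_sum_partialDeriv'_mul hψ hψs hw1.continuous fun i => (hν i).continuous
  have hψg : Integrable fun x => ψ x * (gradSq n w x / √(1 + gradSq n w x)) :=
    (hψ.continuous.mul hw1.continuous_gradSq_div_sqrt).integrable_of_hasCompactSupport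
      hψs.mul_right
  have hexpand : (fun x => ∑ i, partialDeriv' n (fun y => ψ y * w y) i x * normalizedGrad n w i x)
      = fun x => w x * ∑ i, partialDeriv' n ψ i x * normalizedGrad n w i x +
        ψ x * (gradSq n w x / √(1 + gradSq n w x)) :=
    funext fun x => sum_partialDeriv'_mul_mul_normalizedGrad
      (hψ.differentiable one_ne_zero x) (hw1.differentiable one_ne_zero x)
  have ibp := integral_mul_divergence_eq_neg (hψ.mul hw1) hψs.mul_right hν
  rw [hexpand, integral_add hwS hψg, ← neg_neg (divergence n _), ← meanCurv_eq_neg_divergence]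
    at ibp
  simp only [Pi.neg_apply, mul_neg, integral_neg] at ibp
  linarith

theorem integral_mul_sqrt_one_add_gradSq_le_add {ψ w : EuclideanSpace ℝ (Fin n) → ℝ}
    (hw : ContDiff ℝ 1 w) (hψ : Continuous ψ) (hψs : HasCompactSupport ψ) (hψ0 : ∀ x, 0 ≤ ψ x) :
    ∫ x, ψ x * √(1 + gradSq n w x) ≤
      (∫ x, ψ x) + ∫ x, ψ x * (gradSq n w x / √(1 + gradSq n w x)) := by
  have hψg : Integrable fun x => ψ x * (gradSq n w x / √(1 + gradSq n w x)) :=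
    (hψ.mul hw.continuous_gradSq_div_sqrt).integrable_of_hasCompactSupport hψs.mul_right
  have hψi : Integrable ψ := hψ.integrable_of_hasCompactSupport hψs
  rw [← integral_add hψi hψg]
  refine integral_mono ((hψ.mul (hw.sqrt_one_add_gradSq (m := 0) (by simp)).continuous)
    |>.integrable_of_hasCompactSupport hψs.mul_right) (hψi.add hψg) fun x => ?_
  simpa only [mul_add, mul_one] using mul_le_mul_of_nonneg_left
    (Real.sqrt_one_add_le_one_add_div_sqrt (gradSq_nonneg w x)) (hψ0 x)

theorem integral_mul_gradSq_div_sqrt_le {ψ w : EuclideanSpace ℝ (Fin n) → ℝ} {M : ℝ}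
    (hw : ContDiff ℝ 2 w) (hM : ∀ x, |w x| ≤ M) (hψ : ContDiff ℝ 1 ψ)
    (hψs : HasCompactSupport ψ) (hψ0 : ∀ x, 0 ≤ ψ x) :
    ∫ x, ψ x * (gradSq n w x / √(1 + gradSq n w x)) ≤
      M * (∫ x, ‖fderiv ℝ ψ x‖) + M * ∫ x, ψ x * |meanCurv n w x| := by
  have hw1 : ContDiff ℝ 1 w := hw.of_le one_le_two
  have hν : ∀ i, ContDiff ℝ 1 (normalizedGrad n w i) := hw.normalizedGrad (by norm_num)
  have hH : Continuous (meanCurv n w) := by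
    rw [meanCurv_eq_neg_divergence]
    exact (continuous_finsetSum _ fun i _ => (hν i).continuous_partialDeriv' i).neg
  have hint : ∀ {u : EuclideanSpace ℝ (Fin n) → ℝ}, Continuous u →
      Integrable fun x => ψ x * u x := fun hu =>
    (hψ.continuous.mul hu).integrable_of_hasCompactSupport hψs.mul_right
  have hψwH : Integrable fun x => ψ x * w x * meanCurv n w x := by
    simpa only [mul_assoc] using hint (u := fun x => w x * meanCurv n w x) (hw1.continuous.mul hH)
  have hwS := integrable_mul_sum_partialDeriv'_mul hψ hψs hw1.continuous fun i => (hν i).continuous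
  have hdψ : Integrable fun x => ‖fderiv ℝ ψ x‖ :=
    (hψ.continuous_fderiv one_ne_zero).norm.integrable_of_hasCompactSupport (hψs.fderiv ℝ).norm
  have hM0 : 0 ≤ M := (abs_nonneg _).trans (hM 0)
  rw [integral_mul_gradSq_div_sqrt_eq hψ hψs hw, sub_eq_add_neg, ← integral_neg, add_comm,
    ← integral_const_mul, ← integral_const_mul]
  refine add_le_add (integral_mono hwS.neg (hdψ.const_mul M) fun x => ?_)
    (integral_mono hψwH ((hint hH.abs).const_mul M) fun x => ?_)
  · simpa only [mul_neg] using (mul_le_mul_abs_of_abs_le (hM x) (-_)).trans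
      (mul_le_mul_of_nonneg_left ((abs_neg _).trans_le
        (abs_sum_partialDeriv'_mul_normalizedGrad_le ψ w x)) hM0)
  · linarith [mul_le_mul_of_nonneg_left (mul_le_mul_abs_of_abs_le (hM x) (meanCurv n w x))
      (hψ0 x)]

end Graph

/-- Area bound for graphs: if `w : ℝⁿ → ℝ` is C² with `|w| ≤ M` and `φ` is C¹ with
compact support, then
`∫ φ²√(1+|dw|²) ≤ ∫ φ² + M ∫ |d(φ²)| + M ∫ φ²|H|` where `H` is the mean curvature of
the graph of `w`. -/
theorem graph_area_bound (n : ℕ) (w φ : EuclideanSpace ℝ (Fin n) → ℝ) (M : ℝ)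
    (hw : ContDiff ℝ 2 w) (hM : ∀ x, |w x| ≤ M)
    (hφ : ContDiff ℝ 1 φ) (hsupp : HasCompactSupport φ) :
    (∫ x, (φ x) ^ 2 * Real.sqrt (1 + gradSq n w x)) ≤
      (∫ x, (φ x) ^ 2) + M * (∫ x, ‖fderiv ℝ (fun y => (φ y) ^ 2) x‖)
        + M * (∫ x, (φ x) ^ 2 * |meanCurv n w x|) := by
  have hψ : ContDiff ℝ 1 fun x => φ x ^ 2 := hφ.pow 2
  have hψs : HasCompactSupport fun x => φ x ^ 2 := hsupp.comp_left (g := (· ^ 2)) (by simp)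
  have hψ0 : ∀ x, 0 ≤ φ x ^ 2 := fun x => sq_nonneg (φ x)
  linarith [integral_mul_sqrt_one_add_gradSq_le_add (hw.of_le one_le_two) hψ.continuous hψs hψ0,
    integral_mul_gradSq_div_sqrt_le hw hM hψ hψs hψ0]
end

section
/- Suppose real numbers a < 0, y₀, t₀ ∈ (0,1], η ∈ (0,1], and g ∈ [0,∞) satisfy a y₀² η + (4a² y₀² + 2a t₀) η g²/(1+g²) - 8|a y₀| t₀ g/(1+g²) ≤ 0, with a ≤ -2. Then η g ≤ 4. -/
set_option maxHeartbeats 1000000 in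
/-- Algebraic case analysis at the spatial maximum in the sharp gradient estimate:
with `a ≤ -2`, `y₀ ≥ 1`, `t₀, η ∈ (0,1]`, `g ≥ 0`, the inequality
`a y₀² η + (4a² y₀² + 2a t₀) η g²/(1+g²) - 8|a y₀| t₀ g/(1+g²) ≤ 0` forces `ηg ≤ 4`. -/
theorem gradient_estimate_case_analysis (a y₀ t₀ η g : ℝ)
    (ha : a ≤ -2) (hy : 1 ≤ y₀) (ht₀ : 0 < t₀) (ht₁ : t₀ ≤ 1)
    (hη₀ : 0 < η) (hη₁ : η ≤ 1) (hg : 0 ≤ g)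
    (h : a * y₀ ^ 2 * η + (4 * a ^ 2 * y₀ ^ 2 + 2 * a * t₀) * η * (g ^ 2 / (1 + g ^ 2))
          - 8 * |a * y₀| * t₀ * (g / (1 + g ^ 2)) ≤ 0) :
    η * g ≤ 4 := by
  have hay : a * y₀ < 0 := mul_neg_of_neg_of_pos (by linarith) (by linarith)
  rw [abs_of_neg hay] at h
  have hs : (0:ℝ) < 1 + g ^ 2 := by positivity
  have h' : a * y₀ ^ 2 * η * (1 + g ^ 2) + (4 * a ^ 2 * y₀ ^ 2 + 2 * a * t₀) * η * g ^ 2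
      - 8 * (-(a * y₀)) * t₀ * g ≤ 0 := by
    have := mul_le_mul_of_nonneg_right h (le_of_lt hs)
    field_simp at this ⊢
    nlinarith [this]
  rcases le_or_gt 8 (-(a * y₀) * η * g) with hc | hc
  · -- big case: show g ≤ 1
    have hg1 : g ≤ 1 := by
      by_contra hg1
      push_neg at hg1
      have hb : 0 < -(a * y₀) := by linarith
      have k1 : 8 * (-(a * y₀) * t₀ * g) ≤ (-(a * y₀) * η * g) * (-(a * y₀) * t₀ * g) :=
        mul_le_mul_of_nonneg_right hc (by positivity)
      have k2 : a ^ 2 * y₀ ^ 2 * η * t₀ * g ^ 2 ≤ a ^ 2 * y₀ ^ 2 * η * g ^ 2 := by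
        nlinarith [mul_nonneg (mul_nonneg (sq_nonneg (a*y₀)) hη₀.le) (sq_nonneg g)]
      have k3 : 0 ≤ a ^ 2 + 2 * a * t₀ := by
        nlinarith [mul_nonneg (by linarith : (0:ℝ) ≤ -a) (by linarith : (0:ℝ) ≤ -a - 2),
          mul_nonneg (by linarith : (0:ℝ) ≤ -a) (by linarith : (0:ℝ) ≤ 1 - t₀)]
      have k4 : a * y₀ ^ 2 * η * (1 + g ^ 2) + 2 * a ^ 2 * y₀ ^ 2 * η * g ^ 2 ≤ 0 := by
        nlinarith [h', k1, k2,
          mul_nonneg (mul_nonneg k3 hη₀.le) (sq_nonneg g),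
          mul_nonneg (mul_nonneg (mul_nonneg (sq_nonneg a) (by nlinarith : (0:ℝ) ≤ y₀^2 - 1)) hη₀.le) (sq_nonneg g)]
      nlinarith [k4,
        mul_pos (mul_pos (by positivity : (0:ℝ) < y₀^2) hη₀) (by nlinarith : (0:ℝ) < 2*a^2 + 2*a),
        mul_nonneg (mul_nonneg (mul_nonneg (sq_nonneg y₀) hη₀.le) (by nlinarith : (0:ℝ) ≤ g^2 - 1)) (by nlinarith : (0:ℝ) ≤ 2*a^2 + a)]
    nlinarith
  · nlinarith [mul_pos (mul_pos (neg_pos.mpr hay) hη₀) (lt_of_lt_of_le zero_lt_two (by nlinarith : (2:ℝ) ≤ -(a*y₀)))]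
end

section
/- For all sufficiently large λ > 0: if w : ℝ × [0,∞) → ℝ solves graphical mean curvature flow, w(x,0) < u⁺(x,0) for -π/λ < x < 0 and u⁻(x,0) < w(x,0) for 0 < x < π/λ, where u⁺(x,t) = u^λ(x + π/λ, t) - 3λ and u⁻(x,t) = -u^λ(x,t) + 3λ with u^λ the rescaled grim reaper, then w(-e^{-λ²}, 1) < -λ and w(e^{-λ²}, 1) > λ; consequently max_{|x| ≤ e^{-λ²}} |∂_x w(x,1)| ≥ λ e^{λ²}. -/
open Real Set Filter Topology

lemma deriv_nonneg_of_left_le {g : ℝ → ℝ} {a d : ℝ} (hg : HasDerivAt g d a)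
    (h : ∀ᶠ t in 𝓝[<] a, g t ≤ g a) : 0 ≤ d := by
  have hs := hasDerivAt_iff_tendsto_slope.mp hg
  have hs' : Tendsto (slope g a) (𝓝[<] a) (𝓝 d) :=
    hs.mono_left (nhdsWithin_mono _ fun t ht => ne_of_lt ht)
  refine ge_of_tendsto hs' ?_
  filter_upwards [h, self_mem_nhdsWithin] with t ht ht'
  have h1 : t - a < 0 := sub_neg.mpr ht'
  have h2 : g t - g a ≤ 0 := sub_nonpos.mpr ht
  rw [slope_def_field]
  exact div_nonneg_of_nonpos h2 h1.le

lemma second_deriv_nonpos_of_isLocalMax {f : ℝ → ℝ} {x c : ℝ}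
    (hmax : IsLocalMax f x)
    (hdiff : ∀ᶠ y in 𝓝 x, DifferentiableAt ℝ f y)
    (hder : HasDerivAt (deriv f) c x) : c ≤ 0 := by
  by_contra hc
  push_neg at hc
  have h0 : deriv f x = 0 := hmax.deriv_eq_zero
  have hs : Tendsto (slope (deriv f) x) (𝓝[>] x) (𝓝 c) :=
    (hasDerivAt_iff_tendsto_slope.mp hder).mono_left
      (nhdsWithin_mono _ fun t ht => ne_of_gt ht)
  have hpos : ∀ᶠ y in 𝓝[>] x, 0 < deriv f y := by
    filter_upwards [hs.eventually (eventually_gt_nhds hc), self_mem_nhdsWithin] with y hy hy'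
    have hyx : 0 < y - x := sub_pos.mpr hy'
    rw [slope_def_field, h0, sub_zero] at hy
    have := mul_pos hy hyx
    rwa [div_mul_cancel₀ _ hyx.ne'] at this
  obtain ⟨u, hu, hIoc⟩ := mem_nhdsGT_iff_exists_Ioc_subset.mp hpos
  obtain ⟨ε, hε, hball⟩ := Metric.eventually_nhds_iff.mp (hdiff.and (hmax : ∀ᶠ y in 𝓝 x, f y ≤ f x))
  set b := min u (x + ε / 2) with hb
  have hxb : x < b := lt_min hu (by linarith)
  have hmem : ∀ y ∈ Icc x b, DifferentiableAt ℝ f y ∧ f y ≤ f x := by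
    intro y hy
    refine hball ?_
    have h1 : y ≤ x + ε / 2 := hy.2.trans (min_le_right _ _)
    have h2 : x ≤ y := hy.1
    rw [Real.dist_eq, abs_lt]
    constructor <;> linarith
  have hmono : StrictMonoOn f (Icc x b) := by
    refine strictMonoOn_of_deriv_pos (convex_Icc _ _) ?_ ?_
    · intro y hy
      exact ((hmem y hy).1).continuousAt.continuousWithinAt
    · intro y hy
      rw [interior_Icc] at hy
      exact hIoc ⟨hy.1, hy.2.le.trans (min_le_left _ _)⟩
  have := hmono (left_mem_Icc.mpr hxb.le) (right_mem_Icc.mpr hxb.le) hxb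
  exact absurd (hmem b (right_mem_Icc.mpr hxb.le)).2 (not_le.mpr this)

lemma grim_comparison (l : ℝ) (hl : 2 ≤ l) (w : ℝ → ℝ → ℝ)
    (hw : ContDiff ℝ (⊤ : ℕ∞) (fun p : ℝ × ℝ => w p.1 p.2))
    (hpde : ∀ x t, 0 ≤ t → deriv (w x) t =
        deriv (deriv (fun y => w y t)) x / (1 + (deriv (fun y => w y t) x) ^ 2))
    (hinit : ∀ x, -π / l < x → x < 0 → w x 0 < -Real.log (Real.sin (l * x + π)) / l - 3 * l) :
    ∀ x, -π / l < x → x < 0 →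
      w x 1 ≤ l * 1 - Real.log (Real.sin (l * x + π)) / l - 3 * l := by
  have l0 : (0:ℝ) < l := by linarith
  set B : ℝ → ℝ → ℝ := fun x t => l * t - Real.log (Real.sin (l * x + π)) / l - 3 * l with hB
  have hcw : Continuous fun p : ℝ × ℝ => w p.1 p.2 := hw.continuous
  have hwx : ∀ t, ContDiff ℝ (⊤ : ℕ∞) fun y => w y t := fun t =>
    hw.comp (contDiff_id.prodMk contDiff_const)
  have hwt : ∀ x, ContDiff ℝ (⊤ : ℕ∞) (w x) := fun x =>
    hw.comp (contDiff_const.prodMk contDiff_id)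
  have hIoo := Ioo (-π / l) (0:ℝ)
  have hSpos : ∀ x ∈ Ioo (-π / l) (0:ℝ), 0 < Real.sin (l * x + π) := by
    intro x hx
    apply Real.sin_pos_of_pos_of_lt_pi
    · have : l * (-π / l) < l * x := by
        exact mul_lt_mul_of_pos_left hx.1 l0
      rw [mul_div_cancel₀ _ l0.ne'] at this
      linarith
    · have : l * x < 0 := mul_neg_of_pos_of_neg l0 hx.2
      linarith
  -- the key δ-comparison
  have key : ∀ δ : ℝ, 0 < δ → ∀ x ∈ Ioo (-π / l) (0:ℝ), ∀ t ∈ Icc (0:ℝ) 1,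
      w x t < B x t + δ * t := by
    intro δ hδ
    by_contra hcon
    push_neg at hcon
    obtain ⟨x₀, hx₀, t₀, ht₀, hge⟩ := hcon
    -- bound on w over the compact space-time region
    obtain ⟨M, hM⟩ : ∃ M, ∀ x ∈ Icc (-π/l) (0:ℝ), ∀ t ∈ Icc (0:ℝ) 1, w x t ≤ M := by
      have hcomp : IsCompact (Icc (-π/l) (0:ℝ) ×ˢ Icc (0:ℝ) 1) :=
        isCompact_Icc.prod isCompact_Icc
      obtain ⟨M, hM⟩ := (hcomp.image hcw).bddAbove
      exact ⟨M, fun x hx t ht => hM (Set.mem_image_of_mem _ (Set.mk_mem_prod hx ht))⟩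
    set c : ℝ := Real.exp (l * (-(3*l) - M)) with hc
    have c0 : 0 < c := Real.exp_pos _
    have hKbound : ∀ x ∈ Ioo (-π/l) (0:ℝ), ∀ t ∈ Icc (0:ℝ) 1,
        B x t + δ * t ≤ w x t → c ≤ Real.sin (l * x + π) := by
      intro x hx t ht hwB
      have hS := hSpos x hx
      have hwM := hM x (Ioo_subset_Icc_self hx) t ht
      have h1 : Real.log (Real.sin (l*x+π)) / l ≥ -(3*l) - M := by
        have hlt : 0 ≤ l * t := mul_nonneg l0.le ht.1
        have hdt : 0 ≤ δ * t := mul_nonneg hδ.le ht.1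
        simp only [hB] at hwB
        linarith
      have h2 : l * (-(3*l) - M) ≤ Real.log (Real.sin (l*x+π)) := by
        have := mul_le_mul_of_nonneg_left h1 l0.le
        rwa [mul_div_cancel₀ _ l0.ne'] at this
      calc c = Real.exp (l * (-(3*l) - M)) := rfl
        _ ≤ Real.exp (Real.log (Real.sin (l*x+π))) := Real.exp_le_exp.mpr h2
        _ = Real.sin (l*x+π) := Real.exp_log hS
    set K : Set ℝ := Icc (-π/l) 0 ∩ (fun x => Real.sin (l*x+π)) ⁻¹' Ici c with hK
    have hScont : Continuous fun x : ℝ => Real.sin (l*x+π) := by fun_prop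
    have hKcomp : IsCompact K := isCompact_Icc.inter_right (isClosed_Ici.preimage hScont)
    have hKsub : K ⊆ Ioo (-π/l) (0:ℝ) := by
      rintro x ⟨hxI, hxS⟩
      have hxS' : c ≤ Real.sin (l*x+π) := hxS
      constructor
      · rcases lt_or_eq_of_le hxI.1 with h | h
        · exact h
        · exfalso
          rw [← h, mul_div_cancel₀ _ l0.ne'] at hxS'
          simp at hxS'
          linarith
      · rcases lt_or_eq_of_le hxI.2 with h | h
        · exact h
        · exfalso
          rw [h] at hxS'
          simp at hxS'
          linarith
    set Ψ : ℝ × ℝ → ℝ := fun p =>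
      w p.1 p.2 - (l * p.2 - Real.log (max c (Real.sin (l * p.1 + π))) / l - 3 * l)
        - δ * p.2 with hΨ
    have hΨcont : Continuous Ψ := by
      apply Continuous.sub
      apply Continuous.sub hcw
      apply Continuous.sub
      apply Continuous.sub (by fun_prop)
      · exact (Continuous.log (continuous_const.max (hScont.comp continuous_fst))
          (fun p => (lt_of_lt_of_le c0 (le_max_left _ _)).ne')).div_const l
      all_goals fun_prop
    have hΨeq : ∀ x, c ≤ Real.sin (l*x+π) → ∀ t, Ψ (x, t) = w x t - B x t - δ * t := by
      intro x hx t
      simp only [hΨ, hB, max_eq_right hx]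
    set A : Set (ℝ × ℝ) := (K ×ˢ Icc (0:ℝ) 1) ∩ Ψ ⁻¹' Ici 0 with hA
    have hAcomp : IsCompact A :=
      (hKcomp.prod isCompact_Icc).inter_right (isClosed_Ici.preimage hΨcont)
    have hAne : A.Nonempty := by
      have hxK : x₀ ∈ K := ⟨Ioo_subset_Icc_self hx₀, hKbound x₀ hx₀ t₀ ht₀ hge⟩
      refine ⟨(x₀, t₀), ⟨Set.mk_mem_prod hxK ht₀, ?_⟩⟩
      rw [Set.mem_preimage, Set.mem_Ici, hΨeq x₀ hxK.2 t₀]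
      linarith
    obtain ⟨p, hpA, hpmin⟩ := hAcomp.exists_isMinOn hAne continuous_snd.continuousOn
    obtain ⟨⟨hxK, htI⟩, hΨ0⟩ := hpA
    set xs := p.1 with hxs
    set ts := p.2 with hts
    have hxIoo : xs ∈ Ioo (-π/l) (0:ℝ) := hKsub hxK
    have hSx : c ≤ Real.sin (l*xs+π) := hxK.2
    have hSxpos : 0 < Real.sin (l*xs+π) := lt_of_lt_of_le c0 hSx
    have hψs : 0 ≤ w xs ts - B xs ts - δ * ts := by
      have : Ψ (xs, ts) = w xs ts - B xs ts - δ * ts := hΨeq xs hSx ts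
      rw [← this]
      exact hΨ0
    have htpos : 0 < ts := by
      rcases lt_or_eq_of_le htI.1 with h | h
      · exact h
      · exfalso
        have h1 := hinit xs hxIoo.1 hxIoo.2
        rw [← h] at hψs
        simp only [hB, mul_zero, neg_div] at hψs
        rw [neg_div] at h1
        linarith
    have hbefore : ∀ x ∈ Ioo (-π/l) (0:ℝ), ∀ t, 0 ≤ t → t < ts →
        w x t - B x t - δ * t < 0 := by
      intro x hx t ht0 htlt
      by_contra hcon2
      push_neg at hcon2
      have htIcc : t ∈ Icc (0:ℝ) 1 := ⟨ht0, htlt.le.trans htI.2⟩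
      have hBw : B x t + δ * t ≤ w x t := by linarith
      have hxK' : x ∈ K := ⟨Ioo_subset_Icc_self hx, hKbound x hx t htIcc hBw⟩
      have hmem : (x, t) ∈ A := by
        refine ⟨Set.mk_mem_prod hxK' htIcc, ?_⟩
        rw [Set.mem_preimage, Set.mem_Ici, hΨeq x hxK'.2 t]
        linarith
      have := hpmin hmem
      simp only [hts] at this
      exact absurd htlt (not_lt.mpr this)
    have hgcont : ∀ x, Continuous fun t => w x t - B x t - δ * t := by
      intro x
      exact ((hwt x).continuous.sub (by fun_prop)).sub (by fun_prop)
    have hψs0 : w xs ts - B xs ts - δ * ts = 0 := by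
      refine le_antisymm ?_ hψs
      have htd : Tendsto (fun t => w xs t - B xs t - δ * t) (𝓝[<] ts)
          (𝓝 (w xs ts - B xs ts - δ * ts)) :=
        ((hgcont xs).tendsto ts).mono_left nhdsWithin_le_nhds
      refine le_of_tendsto htd ?_
      filter_upwards [Ioo_mem_nhdsLT htpos] with t htt
      exact (hbefore xs hxIoo t htt.1.le htt.2).le
    have hattime : ∀ x ∈ Ioo (-π/l) (0:ℝ), w x ts - B x ts - δ * ts ≤ 0 := by
      intro x hx
      by_contra hcon3
      push_neg at hcon3
      have hev : ∀ᶠ t in 𝓝 ts, 0 < w x t - B x t - δ * t :=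
        ((hgcont x).tendsto ts).eventually (eventually_gt_nhds hcon3)
      have hev' : ∀ᶠ t in 𝓝[<] ts, (0 < w x t - B x t - δ * t) ∧ t ∈ Ioo 0 ts := by
        refine (hev.filter_mono nhdsWithin_le_nhds).and (Ioo_mem_nhdsLT htpos)
      obtain ⟨t, htpos', htI'⟩ := hev'.exists
      exact absurd htpos' (not_lt.mpr (hbefore x hx t htI'.1.le htI'.2).le)
    -- local max in space at xs
    have hmax : IsLocalMax (fun x => w x ts - B x ts - δ * ts) xs := by
      have hopen : Ioo (-π/l) (0:ℝ) ∈ 𝓝 xs := isOpen_Ioo.mem_nhds hxIoo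
      filter_upwards [hopen] with y hy
      show w y ts - B y ts - δ * ts ≤ w xs ts - B xs ts - δ * ts
      rw [hψs0]
      exact hattime y hy
    -- spatial derivative facts
    have hlin : ∀ x : ℝ, HasDerivAt (fun y => l * y + π) l x := by
      intro x
      simpa only [mul_one, id_eq] using ((hasDerivAt_id x).const_mul l).add_const π
    have hsin : ∀ x : ℝ, HasDerivAt (fun y => Real.sin (l*y+π)) (Real.cos (l*x+π) * l) x := by
      intro x
      exact (Real.hasDerivAt_sin (l*x+π)).comp x (hlin x)
    have hcosd : ∀ x : ℝ, HasDerivAt (fun y => Real.cos (l*y+π)) (-Real.sin (l*x+π) * l) x := by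
      intro x
      exact (Real.hasDerivAt_cos (l*x+π)).comp x (hlin x)
    set B1 : ℝ → ℝ := fun x => -(Real.cos (l*x+π) / Real.sin (l*x+π)) with hB1def
    have hBx : ∀ x, Real.sin (l*x+π) ≠ 0 → HasDerivAt (fun y => B y ts) (B1 x) x := by
      intro x hx
      have hlog : HasDerivAt (fun y => Real.log (Real.sin (l*y+π)))
          (Real.cos (l*x+π) * l / Real.sin (l*x+π)) x := (hsin x).log hx
      have heq : -(Real.cos (l*x+π) * l / Real.sin (l*x+π) / l) = B1 x := by
        simp only [hB1def]
        rw [div_div, mul_comm (Real.sin (l*x+π)) l, ← div_div,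
          mul_div_assoc, div_self l0.ne', mul_one]
      rw [← heq]
      exact ((hlog.div_const l).const_sub (l * ts)).sub_const (3*l)
    have hB1d : ∀ x, Real.sin (l*x+π) ≠ 0 → HasDerivAt B1 (l / Real.sin (l*x+π)^2) x := by
      intro x hx
      have hsc := Real.sin_sq_add_cos_sq (l*x+π)
      have hnum : -(-Real.sin (l*x+π) * l * Real.sin (l*x+π)
          - Real.cos (l*x+π) * (Real.cos (l*x+π) * l)) = l := by
        linear_combination l * hsc
      have h2 := ((hcosd x).div (hsin x) hx).neg
      exact h2.congr_deriv (by rw [neg_div', hnum])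
    have hwxd : Differentiable ℝ (fun y => w y ts) := (hwx ts).differentiable (by simp)
    have hW1diff : Differentiable ℝ (deriv (fun y => w y ts)) := by
      have h := contDiff_infty_iff_deriv.mp ((hwx ts).of_le (by simp))
      exact h.2.differentiable (by simp)
    have hFd : ∀ x, Real.sin (l*x+π) ≠ 0 →
        HasDerivAt (fun x => w x ts - B x ts - δ * ts)
          (deriv (fun y => w y ts) x - B1 x) x := by
      intro x hx
      exact (((hwxd x).hasDerivAt).sub (hBx x hx)).sub_const (δ * ts)
    have hUopen : IsOpen {x : ℝ | Real.sin (l*x+π) ≠ 0} :=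
      isOpen_compl_singleton.preimage hScont
    have hUx : ∀ᶠ x in 𝓝 xs, Real.sin (l*x+π) ≠ 0 :=
      hUopen.mem_nhds hSxpos.ne'
    have hderiv0 : deriv (fun y => w y ts) xs = B1 xs := by
      have h1 := hmax.deriv_eq_zero
      have h2 := (hFd xs hSxpos.ne').deriv
      rw [h1] at h2
      linarith [h2.symm]
    have hevd : (deriv (fun x => w x ts - B x ts - δ * ts)) =ᶠ[𝓝 xs]
        fun x => deriv (fun y => w y ts) x - B1 x := by
      filter_upwards [hUx] with x hx
      exact (hFd x hx).deriv
    have hsecond : HasDerivAt (deriv (fun x => w x ts - B x ts - δ * ts))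
        (deriv (deriv (fun y => w y ts)) xs - l / Real.sin (l*xs+π)^2) xs := by
      have h1 : HasDerivAt (fun x => deriv (fun y => w y ts) x - B1 x)
          (deriv (deriv (fun y => w y ts)) xs - l / Real.sin (l*xs+π)^2) xs :=
        ((hW1diff xs).hasDerivAt).sub (hB1d xs hSxpos.ne')
      exact h1.congr_of_eventuallyEq hevd
    have hdiffev : ∀ᶠ y in 𝓝 xs,
        DifferentiableAt ℝ (fun x => w x ts - B x ts - δ * ts) y := by
      filter_upwards [hUx] with x hx
      exact (hFd x hx).differentiableAt
    have hW2le : deriv (deriv (fun y => w y ts)) xs ≤ l / Real.sin (l*xs+π)^2 := by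
      have := second_deriv_nonpos_of_isLocalMax hmax hdiffev hsecond
      linarith
    -- time derivative
    have hgt : HasDerivAt (fun t => w xs t - B xs t - δ * t)
        (deriv (w xs) ts - l - δ) ts := by
      have h1 : HasDerivAt (w xs) (deriv (w xs) ts) ts :=
        (((hwt xs).differentiable (by simp)) ts).hasDerivAt
      have h2 : HasDerivAt (fun t => B xs t) l ts := by
        have := (((hasDerivAt_id ts).const_mul l).sub_const
          (Real.log (Real.sin (l*xs+π))/l)).sub_const (3*l)
        simpa only [mul_one, id_eq] using this
      have h3 : HasDerivAt (fun t : ℝ => δ * t) δ ts := by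
        simpa only [mul_one, id_eq] using (hasDerivAt_id ts).const_mul δ
      exact (h1.sub h2).sub h3
    have h0le : 0 ≤ deriv (w xs) ts - l - δ := by
      apply deriv_nonneg_of_left_le hgt
      filter_upwards [Ioo_mem_nhdsLT htpos] with t ht
      have h4 := (hbefore xs hxIoo t ht.1.le ht.2).le
      show w xs t - B xs t - δ * t ≤ w xs ts - B xs ts - δ * ts
      linarith [hψs0]
    -- PDE contradiction
    have hpd := hpde xs ts htpos.le
    have h1p : 1 + (deriv (fun y => w y ts) xs)^2 = 1 / Real.sin (l*xs+π)^2 := by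
      have hsc := Real.sin_sq_add_cos_sq (l*xs+π)
      have hs2 : Real.sin (l*xs+π)^2 ≠ 0 := (pow_pos hSxpos 2).ne'
      rw [hderiv0]
      simp only [hB1def]
      rw [neg_sq, div_pow]
      conv_rhs => rw [← hsc]
      rw [add_div, div_self hs2]
    have hDle : deriv (w xs) ts ≤ l := by
      rw [hpd, h1p, one_div, div_inv_eq_mul]
      have hS2 : (0:ℝ) < Real.sin (l*xs+π)^2 := pow_pos hSxpos 2
      have := mul_le_mul_of_nonneg_right hW2le hS2.le
      rwa [div_mul_cancel₀ _ hS2.ne'] at this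
    linarith
  intro x hx1 hx2
  refine le_of_forall_pos_le_add ?_
  intro ε hε
  have h5 := key ε hε x ⟨hx1, hx2⟩ 1 ⟨zero_le_one, le_refl 1⟩
  simp only [hB] at h5
  linarith

/-- Sharpness of the gradient estimate via grim reaper barriers: for all sufficiently
large `λ`, any solution `w` of one-dimensional graphical mean curvature flow which at
time `0` lies below the upward translating barrier `u⁺(x,0) = u^λ(x+π/λ,0) - 3λ` on
`(-π/λ, 0)` and above the downward barrier `u⁻(x,0) = -u^λ(x,0) + 3λ` on `(0, π/λ)`
satisfies `w(-e^{-λ²},1) < -λ` and `w(e^{-λ²},1) > λ`; consequently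
`max_{|x| ≤ e^{-λ²}} |∂ₓw(x,1)| ≥ λ e^{λ²}`. -/
theorem grim_reaper_sharpness :
    ∃ Λ : ℝ, 0 < Λ ∧ ∀ l : ℝ, Λ ≤ l → ∀ w : ℝ → ℝ → ℝ,
      ContDiff ℝ (⊤ : ℕ∞) (fun p : ℝ × ℝ => w p.1 p.2) →
      (∀ x t, 0 ≤ t →
        deriv (w x) t =
          deriv (deriv (fun y => w y t)) x / (1 + (deriv (fun y => w y t) x) ^ 2)) →
      (∀ x, -Real.pi / l < x → x < 0 →
        w x 0 < -Real.log (Real.sin (l * (x + Real.pi / l))) / l - 3 * l) →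
      (∀ x, 0 < x → x < Real.pi / l →
        Real.log (Real.sin (l * x)) / l + 3 * l < w x 0) →
      w (-Real.exp (-l ^ 2)) 1 < -l ∧ l < w (Real.exp (-l ^ 2)) 1 ∧
        ∃ x : ℝ, |x| ≤ Real.exp (-l ^ 2) ∧
          l * Real.exp (l ^ 2) ≤ |deriv (fun y => w y 1) x| := by
  refine ⟨2, two_pos, ?_⟩
  intro l hl w hw hpde h1 h2
  have l0 : (0:ℝ) < l := by linarith
  -- rewrite initial condition 1
  have h1' : ∀ x, -π / l < x → x < 0 →
      w x 0 < -Real.log (Real.sin (l * x + π)) / l - 3 * l := by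
    intro x hx1 hx2
    have := h1 x hx1 hx2
    rwa [mul_add, mul_div_cancel₀ _ l0.ne'] at this
  have hleft := grim_comparison l hl w hw hpde h1'
  -- the reflected solution
  set w2 : ℝ → ℝ → ℝ := fun x t => -w (-x) t with hw2def
  have hw2 : ContDiff ℝ (⊤ : ℕ∞) (fun p : ℝ × ℝ => w2 p.1 p.2) :=
    (hw.comp ((contDiff_fst.neg).prodMk contDiff_snd)).neg
  have hwx : ∀ t, ContDiff ℝ (⊤ : ℕ∞) fun y => w y t := fun t =>
    hw.comp (contDiff_id.prodMk contDiff_const)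
  have hwxd : ∀ t, Differentiable ℝ fun y => w y t := fun t =>
    (hwx t).differentiable (by simp)
  have hW1d : ∀ t, Differentiable ℝ (deriv fun y => w y t) := by
    intro t
    have h := contDiff_infty_iff_deriv.mp ((hwx t).of_le (by simp))
    exact h.2.differentiable (by simp)
  have hnegd : ∀ z : ℝ, HasDerivAt (fun y : ℝ => -y) (-1) z := fun z =>
    (hasDerivAt_id z).neg
  have hpde2 : ∀ x t, 0 ≤ t → deriv (w2 x) t =
      deriv (deriv (fun y => w2 y t)) x / (1 + (deriv (fun y => w2 y t) x) ^ 2) := by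
    intro x t ht
    have step1 : ∀ z : ℝ, HasDerivAt (fun y => w2 y t)
        ((deriv fun y => w y t) (-z)) z := by
      intro z
      have hc : HasDerivAt (fun y => w (-y) t) ((deriv fun y => w y t) (-z) * -1) z :=
        ((hwxd t (-z)).hasDerivAt).comp z (hnegd z)
      have := hc.neg
      simpa only [mul_neg_one, neg_neg, Pi.neg_def] using this
    have hW1eq : (deriv fun y => w2 y t) = fun z => (deriv fun y => w y t) (-z) :=
      funext fun z => (step1 z).deriv
    have step2 : HasDerivAt (fun z => (deriv fun y => w y t) (-z))
        (-((deriv (deriv fun y => w y t)) (-x))) x := by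
      have hc : HasDerivAt (fun z => (deriv fun y => w y t) (-z))
          ((deriv (deriv fun y => w y t)) (-x) * -1) x :=
        ((hW1d t (-x)).hasDerivAt).comp x (hnegd x)
      simpa only [mul_neg_one] using hc
    have hLHS : deriv (w2 x) t = -(deriv (w (-x)) t) := by
      have : w2 x = fun t => -(w (-x) t) := rfl
      rw [this, deriv.fun_neg]
    rw [hLHS, hpde (-x) t ht, hW1eq, step2.deriv]
    rw [neg_div]
  have h2' : ∀ x, -π / l < x → x < 0 →
      w2 x 0 < -Real.log (Real.sin (l * x + π)) / l - 3 * l := by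
    intro x hx1 hx2
    have hx1' : 0 < -x := by linarith
    have hx2' : -x < π / l := by
      rw [lt_div_iff₀ l0]
      have : l * (-π / l) < l * x := mul_lt_mul_of_pos_left hx1 l0
      rw [mul_div_cancel₀ _ l0.ne'] at this
      nlinarith
    have h3 := h2 (-x) hx1' hx2'
    have hsin : Real.sin (l * x + π) = Real.sin (l * -x) := by
      rw [Real.sin_add_pi, mul_neg, Real.sin_neg]
    show -w (-x) 0 < -Real.log (Real.sin (l * x + π)) / l - 3 * l
    rw [hsin, neg_div]
    linarith
  have hright := grim_comparison l hl w2 hw2 hpde2 h2'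
  -- numerics
  set b : ℝ := Real.exp (-l ^ 2) with hbdef
  have hb0 : 0 < b := Real.exp_pos _
  set a : ℝ := l * b with hadef
  have ha0 : 0 < a := mul_pos l0 hb0
  have hexp1 : Real.exp (l ^ 2) * b = 1 := by
    rw [hbdef, ← Real.exp_add]
    simp
  have hexpgt : l < Real.exp (l ^ 2) := by
    have := Real.add_one_le_exp (l ^ 2)
    nlinarith
  have ha1 : a < 1 := by
    have := mul_lt_mul_of_pos_right hexpgt hb0
    rwa [hexp1] at this
  have hx₀mem : -π / l < -b ∧ (-b : ℝ) < 0 := by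
    constructor
    · rw [div_lt_iff₀ l0]  -- -π / l < -b ↔ -π < -b * l
      have : a < π := lt_trans ha1 (by linarith [Real.pi_gt_three])
      nlinarith
    · linarith
  have hsin_eq : Real.sin (l * (-b) + π) = Real.sin a := by
    rw [show l * (-b) + π = π - a by rw [hadef]; ring, Real.sin_pi_sub]
  have hsin_lb : b < Real.sin a := by
    have hcube : a - a ^ 3 / 4 < Real.sin a := by
      have := Real.sin_gt_sub_cube ha0
      nlinarith [pow_pos ha0 3]
    have ha3 : a ^ 3 ≤ a := by
      have := pow_le_pow_of_le_one ha0.le ha1.le (by norm_num : 1 ≤ 3)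
      simpa using this
    have : (3/4 : ℝ) * a ≤ a - a ^ 3 / 4 := by nlinarith
    have hba : 2 * b ≤ a := by
      rw [hadef]; nlinarith
    linarith
  have hlog : -(l ^ 2) < Real.log (Real.sin a) := by
    have := Real.log_lt_log hb0 hsin_lb
    rwa [hbdef, Real.log_exp] at this
  have hBlt : l * 1 - Real.log (Real.sin (l * (-b) + π)) / l - 3 * l < -l := by
    rw [hsin_eq]
    have hdiv : -l < Real.log (Real.sin a) / l := by
      rw [lt_div_iff₀ l0]
      nlinarith
    linarith
  -- first conclusion
  have hc1 : w (-b) 1 < -l :=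
    lt_of_le_of_lt (hleft (-b) hx₀mem.1 hx₀mem.2) hBlt
  -- second conclusion
  have hc2 : l < w b 1 := by
    have := lt_of_le_of_lt (hright (-b) hx₀mem.1 hx₀mem.2) hBlt
    have heq : w2 (-b) 1 = -w b 1 := by
      show -w (-(-b)) 1 = -w b 1
      rw [neg_neg]
    rw [heq] at this
    linarith
  refine ⟨hc1, hc2, ?_⟩
  -- mean value theorem
  have hfd : Differentiable ℝ fun y => w y 1 := hwxd 1
  have hab : (-b : ℝ) < b := by linarith
  obtain ⟨ξ, hξI, hξeq⟩ := exists_hasDerivAt_eq_slope (fun y => w y 1)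
    (deriv fun y => w y 1) hab (hfd.continuous.continuousOn)
    (fun x _ => (hfd x).hasDerivAt)
  refine ⟨ξ, ?_, ?_⟩
  · rw [abs_le]
    exact ⟨hξI.1.le, hξI.2.le⟩
  · have hslope : l * Real.exp (l ^ 2) ≤ deriv (fun y => w y 1) ξ := by
      rw [hξeq, show b - -b = 2 * b by ring, le_div_iff₀ (by linarith)]
      have hwdiff : 2 * l < w b 1 - w (-b) 1 := by linarith
      nlinarith [hexp1]
    exact le_trans hslope (le_abs_self _)
end
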